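/- arXiv:1701.01460 — 2 statements merged into one kernel-verified Lean document; each statement's English description precedes it below -/
import Mathlib

section
/- Let φ : ℝ² → ℝ be smooth, nonnegative, equal to 1 on the unit disc and supported in the disc of radius 2, and for λ ≥ 1 let φ_λ(q,p) = λ φ(λq, λp). Define ν(t,q,p) = φ_λ(q - t p², p) and ν̄(t,q) = ∫_ℝ ν(t,q,p) dp. Then ν̄(λ, 0) ≥ √((√5 − 1)/2). -/
open MeasureTheory

/-- Failure of decay for the degenerate transport equation ∂_t ν + p² ∂_q ν = 0:
with φ_λ(q,p) = λφ(λq,λp) and ν(t,q,p) = φ_λ(q - t p², p), one has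
ν̄(λ,0) ≥ √((√5−1)/2). -/
theorem stmt6 (φ : ℝ × ℝ → ℝ) (hsmooth : ContDiff ℝ (⊤ : ℕ∞) φ)
    (hpos : ∀ x : ℝ × ℝ, 0 ≤ φ x)
    (hone : ∀ x : ℝ × ℝ, x.1 ^ 2 + x.2 ^ 2 ≤ 1 → φ x = 1)
    (hsupp : ∀ x : ℝ × ℝ, 4 < x.1 ^ 2 + x.2 ^ 2 → φ x = 0)
    (lam : ℝ) (hlam : 1 ≤ lam) :
    Real.sqrt ((Real.sqrt 5 - 1) / 2)
      ≤ ∫ p : ℝ, lam * φ (lam * (0 - lam * p ^ 2), lam * p) := by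
  have hlam0 : 0 < lam := lt_of_lt_of_le one_pos hlam
  set c : ℝ := (Real.sqrt 5 - 1) / 2 with hc_def
  have hs5 : Real.sqrt 5 ^ 2 = 5 := Real.sq_sqrt (by norm_num)
  have hs5_ge : (2 : ℝ) ≤ Real.sqrt 5 := by
    nlinarith [Real.sqrt_nonneg 5]
  have hc0 : 0 ≤ c := by simp only [hc_def]; linarith
  have hcc : c ^ 2 + c = 1 := by simp only [hc_def]; nlinarith
  set r : ℝ := Real.sqrt c / lam with hr_def
  have hr0 : 0 ≤ r := div_nonneg (Real.sqrt_nonneg c) hlam0.le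
  have hr2 : lam ^ 2 * r ^ 2 = c := by
    rw [hr_def, div_pow, Real.sq_sqrt hc0]
    field_simp
  set f : ℝ → ℝ := fun p => lam * φ (lam * (0 - lam * p ^ 2), lam * p) with hf_def
  have hf_cont : Continuous f := by
    apply continuous_const.mul
    exact hsmooth.continuous.comp (by continuity)
  have hf_supp : HasCompactSupport f := by
    apply HasCompactSupport.intro (isCompact_Icc (a := (-2 : ℝ)) (b := 2))
    intro p hp
    simp only [Set.mem_Icc, not_and_or, not_le] at hp
    have hl2 : 1 ≤ lam ^ 2 := by nlinarith
    have hp2 : 4 < p ^ 2 := by rcases hp with h | h <;> nlinarith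
    have h4 : 4 < (lam * p) ^ 2 := by
      have := mul_le_mul_of_nonneg_right hl2 (sq_nonneg p)
      nlinarith
    simp only [hf_def]
    rw [hsupp _ (by simpa using lt_of_lt_of_le h4 (by nlinarith [sq_nonneg (lam * (0 - lam * p ^ 2))]))]
    ring
  have hf_int : Integrable f := hf_cont.integrable_of_hasCompactSupport hf_supp
  have hf_nonneg : ∀ p, 0 ≤ f p := fun p => mul_nonneg hlam0.le (hpos _)
  have hone' : ∀ p ∈ Set.Icc (0 : ℝ) r, f p = lam := by
    intro p hp
    obtain ⟨hp0, hpr⟩ := hp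
    have hpp : p ^ 2 ≤ r ^ 2 := by nlinarith
    have hp2 : lam ^ 2 * p ^ 2 ≤ c := by
      have := mul_le_mul_of_nonneg_left hpp (sq_nonneg lam)
      nlinarith
    simp only [hf_def]
    rw [hone _ (by simp only; nlinarith)]
    ring
  have step1 : ∫ p in Set.Icc (0 : ℝ) r, f p ≤ ∫ p, f p :=
    setIntegral_le_integral hf_int (Filter.Eventually.of_forall hf_nonneg)
  have step2 : ∫ p in Set.Icc (0 : ℝ) r, f p = lam * r := by
    rw [setIntegral_congr_fun measurableSet_Icc hone']
    simp [Real.volume_Icc, hr0, ENNReal.toReal_ofReal, mul_comm]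
  have hlr : lam * r = Real.sqrt c := by
    rw [hr_def]; field_simp [hlam0.ne']
  calc Real.sqrt c = lam * r := hlr.symm
    _ = ∫ p in Set.Icc (0 : ℝ) r, f p := step2.symm
    _ ≤ ∫ p, f p := step1
end

section
/- Let u(t,·) be a real-valued Schwartz function on ℝ for each t. Then for all t, x: 3t (∂_x u(t,x))² + x (u(t,x))² = 2∫_{-∞}^x ∂_x u(t,x') · (Wu)(t,x') dx' + ∫_{-∞}^x (u(t,x'))² dx', where Wu = 3t ∂²_{xx} u + x u. Consequently 3t(∂_x u(t,x))² + x(u(t,x))² ≤ 2‖∂_x u(t,·)‖_{L²}‖Wu(t,·)‖_{L²} + ‖u(t,·)‖²_{L²}. -/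
open MeasureTheory

/-- Spatial derivative ∂_x for functions of (t,x) ∈ ℝ × ℝ. -/
noncomputable def dxA (u : ℝ × ℝ → ℝ) : ℝ × ℝ → ℝ := fun x => fderiv ℝ u x (0, 1)

/-- The Airy commuting operator W = 3t ∂²_{xx} + x. -/
noncomputable def WA (u : ℝ × ℝ → ℝ) : ℝ × ℝ → ℝ :=
  fun x => 3 * x.1 * dxA (dxA u) x + x.2 * u x

section Aux

open SchwartzMap

lemma schwartz_bdd (f : SchwartzMap ℝ ℝ) : ∃ C, ∀ x, ‖f x‖ ≤ C := by
  obtain ⟨C, _, hC⟩ := f.decay 0 0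
  exact ⟨C, fun x => by simpa using hC x⟩

/-- x ↦ f x * x as a Schwartz map. -/
noncomputable def xMulS (f : SchwartzMap ℝ ℝ) : SchwartzMap ℝ ℝ :=
  bilinLeftCLM (ContinuousLinearMap.mul ℝ ℝ)
    (ContinuousLinearMap.id ℝ ℝ).hasTemperateGrowth f

lemma xMulS_apply (f : SchwartzMap ℝ ℝ) (x : ℝ) : xMulS f x = f x * x := rfl

lemma schwartz_mul_integrable (f g : SchwartzMap ℝ ℝ) :
    Integrable (fun x => f x * g x) volume := by
  obtain ⟨C, hC⟩ := schwartz_bdd f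
  exact g.integrable.bdd_mul f.continuous.aestronglyMeasurable (Filter.Eventually.of_forall hC)

lemma schwartz_memLp2 (f : SchwartzMap ℝ ℝ) : MemLp (⇑f) 2 volume := by
  refine (memLp_two_iff_integrable_sq f.continuous.aestronglyMeasurable).2 ?_
  simpa [pow_two] using schwartz_mul_integrable f f

lemma schwartz_eLp2 (f : SchwartzMap ℝ ℝ) :
    (eLpNorm (⇑f) 2 volume).toReal = (∫ y, ‖f y‖ ^ (2:ℝ)) ^ ((2:ℝ)⁻¹) := by
  rw [(schwartz_memLp2 f).eLpNorm_eq_integral_rpow_norm two_ne_zero ENNReal.ofNat_ne_top]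
  rw [ENNReal.toReal_ofReal (by positivity)]
  norm_num

lemma schwartz_setIntegral_mul_le (f g : SchwartzMap ℝ ℝ) (s : Set ℝ) :
    ∫ y in s, f y * g y ≤ (eLpNorm (⇑f) 2 volume).toReal * (eLpNorm (⇑g) 2 volume).toReal := by
  have hnint : Integrable (fun y => ‖f y‖ * ‖g y‖) volume := by
    simpa [abs_mul] using (schwartz_mul_integrable f g).abs
  have h1 : ∫ y in s, f y * g y ≤ ∫ y in s, ‖f y‖ * ‖g y‖ := by
    refine integral_mono_ae ((schwartz_mul_integrable f g).integrableOn)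
      hnint.integrableOn (Filter.Eventually.of_forall fun y => ?_)
    calc f y * g y ≤ |f y * g y| := le_abs_self _
    _ = ‖f y‖ * ‖g y‖ := by rw [abs_mul]; rfl
  have h2 : ∫ y in s, ‖f y‖ * ‖g y‖ ≤ ∫ y, ‖f y‖ * ‖g y‖ :=
    setIntegral_le_integral hnint
      (Filter.Eventually.of_forall fun y => by positivity)
  have h3 : ∫ y, ‖f y‖ * ‖g y‖ ≤
      (∫ y, ‖f y‖ ^ (2:ℝ)) ^ (1/(2:ℝ)) * (∫ y, ‖g y‖ ^ (2:ℝ)) ^ (1/(2:ℝ)) := by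
    refine integral_mul_norm_le_Lp_mul_Lq ⟨by norm_num, by norm_num, by norm_num⟩ ?_ ?_
    · simpa [ENNReal.ofReal_ofNat] using schwartz_memLp2 f
    · simpa [ENNReal.ofReal_ofNat] using schwartz_memLp2 g
  rw [schwartz_eLp2, schwartz_eLp2]
  calc _ ≤ _ := h1
  _ ≤ _ := h2
  _ ≤ _ := h3
  _ = _ := by norm_num

lemma schwartz_setIntegral_sq_le (f : SchwartzMap ℝ ℝ) (s : Set ℝ) :
    ∫ y in s, (f y) ^ 2 ≤ ((eLpNorm (⇑f) 2 volume).toReal) ^ 2 := by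
  have hint : Integrable (fun y => (f y) ^ 2) volume := by
    simpa [pow_two] using schwartz_mul_integrable f f
  have h2 : ∫ y in s, (f y) ^ 2 ≤ ∫ y, (f y) ^ 2 :=
    setIntegral_le_integral hint (Filter.Eventually.of_forall fun y => by positivity)
  have h3 : ∫ y, (f y) ^ 2 = ∫ y, ‖f y‖ ^ (2:ℝ) := by
    congr 1; funext y
    rw [Real.rpow_two]; simp [sq_abs]
  have h4 : (((∫ y, ‖f y‖ ^ (2:ℝ)) ^ ((2:ℝ)⁻¹)) : ℝ) ^ (2:ℕ) = ∫ y, ‖f y‖ ^ (2:ℝ) := by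
    rw [← Real.rpow_natCast (_ ^ _) 2, ← Real.rpow_mul (by positivity)]
    norm_num
  rw [schwartz_eLp2, h4, ← h3]
  exact h2

lemma dxA_contDiff {u : ℝ × ℝ → ℝ} (hu : ContDiff ℝ (⊤ : ℕ∞) u) : ContDiff ℝ (⊤ : ℕ∞) (dxA u) :=
  (hu.fderiv_right (by simp)).clm_apply contDiff_const

lemma hasDerivAt_slice {u : ℝ × ℝ → ℝ} (hu : ContDiff ℝ (⊤ : ℕ∞) u) (t y : ℝ) :
    HasDerivAt (fun z => u (t, z)) (dxA u (t, y)) y :=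
  (hu.differentiable (by simp) (t, y)).hasFDerivAt.comp_hasDerivAt y
    ((hasDerivAt_const y t).prodMk (hasDerivAt_id y))

lemma dxA_eq_deriv {u : ℝ × ℝ → ℝ} {t : ℝ} (hu : ContDiff ℝ (⊤ : ℕ∞) u) (f : SchwartzMap ℝ ℝ)
    (hf : ∀ x, u (t, x) = f x) (y : ℝ) : dxA u (t, y) = deriv (⇑f) y := by
  have h := hasDerivAt_slice hu t y
  have e : (fun z => u (t, z)) = ⇑f := funext hf
  rw [e] at h
  exact (h.deriv).symm

lemma schwartz_tendsto_atBot (f : SchwartzMap ℝ ℝ) :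
    Filter.Tendsto (⇑f) Filter.atBot (nhds 0) :=
  (zero_at_infty f).mono_left atBot_le_cocompact

end Aux

open SchwartzMap in
/-- Pointwise identity and weighted estimate for the Airy operator W = 3t∂²_{xx} + x:
3t(∂_x u)² + x u² = 2∫_{-∞}^x ∂_x u · Wu + ∫_{-∞}^x u², and hence
3t(∂_x u)² + x u² ≤ 2‖∂_x u‖_{L²}‖Wu‖_{L²} + ‖u‖²_{L²}. -/
theorem stmt18 (u : ℝ × ℝ → ℝ) (hsmooth : ContDiff ℝ (⊤ : ℕ∞) u)
    (hschwartz : ∀ t : ℝ, ∃ f : SchwartzMap ℝ ℝ, ∀ x, u (t, x) = f x) :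
    ∀ t x : ℝ,
      (3 * t * (dxA u (t, x)) ^ 2 + x * (u (t, x)) ^ 2
        = 2 * (∫ y in Set.Iic x, dxA u (t, y) * WA u (t, y))
            + ∫ y in Set.Iic x, (u (t, y)) ^ 2)
      ∧ 3 * t * (dxA u (t, x)) ^ 2 + x * (u (t, x)) ^ 2
          ≤ 2 * (eLpNorm (fun y => dxA u (t, y)) 2 volume).toReal
                * (eLpNorm (fun y => WA u (t, y)) 2 volume).toReal
            + ((eLpNorm (fun y => u (t, y)) 2 volume).toReal) ^ 2 := by
  intro t x
  obtain ⟨f, hf⟩ := hschwartz t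
  set g : SchwartzMap ℝ ℝ := derivCLM ℝ ℝ f with hgdef
  set h : SchwartzMap ℝ ℝ := derivCLM ℝ ℝ g with hhdef
  have hg : ∀ y, dxA u (t, y) = g y := fun y => by
    rw [dxA_eq_deriv hsmooth f hf y, hgdef, derivCLM_apply]
  have hh : ∀ y, dxA (dxA u) (t, y) = h y := fun y => by
    rw [dxA_eq_deriv (dxA_contDiff hsmooth) g hg y, hhdef, derivCLM_apply]
  set Ws : SchwartzMap ℝ ℝ := (3 * t) • h + xMulS f with hWdef
  have hW : ∀ y, WA u (t, y) = Ws y := by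
    intro y
    have : Ws y = (3 * t) * h y + f y * y := by
      rw [hWdef]; simp [xMulS_apply]
    rw [this, WA, hh, hf]; ring
  set F : ℝ → ℝ := fun y => 3 * t * (g y) ^ 2 + y * (f y) ^ 2 with hFdef
  have hfd : ∀ y, HasDerivAt (⇑f) (g y) y := fun y => by
    have := (f.smooth 1).differentiable (by simp) y
    simpa [hgdef, derivCLM_apply] using this.hasDerivAt
  have hgd : ∀ y, HasDerivAt (⇑g) (h y) y := fun y => by
    have := (g.smooth 1).differentiable (by simp) y
    simpa [hhdef, derivCLM_apply] using this.hasDerivAt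
  have hF' : ∀ y, HasDerivAt F (2 * (g y * Ws y) + (f y) ^ 2) y := by
    intro y
    have h1 : HasDerivAt (fun y => 3 * t * (g y) ^ 2)
        (3 * t * (2 * g y ^ 1 * h y)) y := ((hgd y).pow 2).const_mul (3 * t)
    have h2 : HasDerivAt (fun y => y * (f y) ^ 2)
        (1 * (f y) ^ 2 + y * (2 * f y ^ 1 * g y)) y :=
      (hasDerivAt_id y).mul ((hfd y).pow 2)
    have h3 := h1.add h2
    have e : 3 * t * (2 * g y ^ 1 * h y) + (1 * (f y) ^ 2 + y * (2 * f y ^ 1 * g y))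
        = 2 * (g y * Ws y) + (f y) ^ 2 := by
      have : Ws y = (3 * t) * h y + f y * y := by rw [hWdef]; simp [xMulS_apply]
      rw [this]; ring
    rw [e] at h3
    exact h3
  have hInt1 : Integrable (fun y => g y * Ws y) volume := schwartz_mul_integrable g Ws
  have hInt2 : Integrable (fun y => (f y) ^ 2) volume := by
    simpa [pow_two] using schwartz_mul_integrable f f
  have hIntD : Integrable (fun y => 2 * (g y * Ws y) + (f y) ^ 2) volume :=
    (hInt1.const_mul 2).add hInt2
  have htend : Filter.Tendsto F Filter.atBot (nhds 0) := by
    have e : F = fun y => 3 * t * (g y * g y) + xMulS f y * f y := by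
      funext y; rw [hFdef, xMulS_apply]; ring
    rw [e]
    have t1 := ((schwartz_tendsto_atBot g).mul (schwartz_tendsto_atBot g)).const_mul (3 * t)
    have t2 := (schwartz_tendsto_atBot (xMulS f)).mul (schwartz_tendsto_atBot f)
    simpa using t1.add t2
  have hFTC : ∫ y in Set.Iic x, (2 * (g y * Ws y) + (f y) ^ 2) = F x := by
    rw [integral_Iic_of_hasDerivAt_of_tendsto' (fun y _ => hF' y)
      hIntD.integrableOn htend, sub_zero]
  have hsplit : ∫ y in Set.Iic x, (2 * (g y * Ws y) + (f y) ^ 2)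
      = 2 * (∫ y in Set.Iic x, g y * Ws y) + ∫ y in Set.Iic x, (f y) ^ 2 := by
    rw [integral_add (hInt1.const_mul 2).integrableOn hInt2.integrableOn,
      integral_const_mul]
  constructor
  · simp only [hg, hW, hf]
    rw [← hsplit, hFTC]
  · simp only [hg, hW, hf]
    have hFx : F x = 3 * t * g x ^ 2 + x * f x ^ 2 := rfl
    rw [← hFx, ← hFTC, hsplit]
    have b1 := schwartz_setIntegral_mul_le g Ws (Set.Iic x)
    have b2 := schwartz_setIntegral_sq_le f (Set.Iic x)
    nlinarith [b1, b2]
end
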